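/- Let d ≥ 1, k ≥ 1, β > 0, Δ > 0, let w^1, …, w^k ∈ ℝ^d be unit vectors and u_1, …, u_k ∈ [−1, 1], and define w̄(ξ) = Σ_{ℓ=1}^k u_ℓ E_ξ[f'(⟨w^ℓ, X⟩)] w^ℓ, where f'(x) = β(1 − tanh²(βx)) and E_ξ is expectation over X ~ N(ξ, I_{d×d}). If ξ ∈ ℝ^d satisfies |⟨w^ℓ, ξ⟩| ≥ Δ for every ℓ ∈ {1, …, k}, then ‖w̄(ξ)‖₂ ≤ 8kβ e^{2β² − 2βΔ}. -/

import Mathlib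

open MeasureTheory ProbabilityTheory Real
open scoped NNReal RealInnerProductSpace

/-- The Gaussian measure on `EuclideanSpace ℝ (Fin d)` with mean `ξ` and covariance
`σ2` times the identity (i.e. i.i.d. `N(ξ i, σ2)` coordinates). -/
noncomputable def gaussE (d : ℕ) (ξ : EuclideanSpace ℝ (Fin d)) (σ2 : ℝ≥0) :
    Measure (EuclideanSpace ℝ (Fin d)) :=
  (Measure.pi fun i : Fin d => gaussianReal (ξ i) σ2).map
    (MeasurableEquiv.toLp 2 (Fin d → ℝ))

/-!
Since `1 - tanh² t = 4 / (eᵗ + e⁻ᵗ)² ≤ 4 e^{-2|t|} ≤ 4 e^{-2st}` whenever `|s| ≤ 1`, the Gaussian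
moment generating function gives `E[1 - tanh² Y] ≤ 4 e^{2v - 2|m|}` for `Y ~ N(m, v)`, taking `s`
the sign of `m`. Under `X ~ N(ξ, I)` the projection `⟨βw, X⟩` is `N(β⟨w, ξ⟩, β²‖w‖²)`, so every
coefficient of `w̄(ξ)` is at most `4β e^{2β² - 2βΔ}` in absolute value, and the triangle inequality
over the `k` unit vectors concludes.
-/

namespace Real

@[fun_prop]
lemma continuous_tanh : Continuous tanh := by
  rw [funext tanh_eq_sinh_div_cosh]
  exact continuous_sinh.div continuous_cosh fun x => (cosh_pos x).ne'

lemma one_sub_tanh_sq_eq (t : ℝ) : 1 - tanh t ^ 2 = 4 / (exp t + exp (-t)) ^ 2 := by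
  have h : exp t * exp (-t) = 1 := by rw [← exp_add, add_neg_cancel, exp_zero]
  rw [tanh_eq]
  field_simp
  linear_combination 4 * h

lemma one_sub_tanh_sq_le (t : ℝ) : 1 - tanh t ^ 2 ≤ 4 * exp (-2 * |t|) := by
  have hle : exp |t| ≤ exp t + exp (-t) := by
    rcases abs_cases t with ⟨h, -⟩ | ⟨h, -⟩ <;> rw [h] <;> linarith [exp_pos t, exp_pos (-t)]
  have hexp : exp (-2 * |t|) = (exp |t| ^ 2)⁻¹ := by
    rw [sq, ← exp_add, ← exp_neg]
    ring_nf
  rw [one_sub_tanh_sq_eq, hexp, ← div_eq_mul_inv]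
  gcongr

end Real

lemma integral_one_sub_tanh_sq_gaussianReal_le (m : ℝ) (v : ℝ≥0) :
    ∫ y, 1 - tanh y ^ 2 ∂gaussianReal m v ≤ 4 * exp (2 * v - 2 * |m|) := by
  obtain ⟨s, hs, hsm⟩ : ∃ s : ℝ, |s| ≤ 1 ∧ s * m = |m| := by
    rcases abs_cases m with ⟨h, -⟩ | ⟨h, -⟩
    exacts [⟨1, by simp, by simp [h]⟩, ⟨-1, by simp, by simp [h]⟩]
  have hpt : ∀ y, 1 - tanh y ^ 2 ≤ 4 * exp (-2 * s * y) := fun y => by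
    have : s * y ≤ |y| := by
      calc s * y ≤ |s| * |y| := by rw [← abs_mul]; exact le_abs_self _
        _ ≤ |y| := mul_le_of_le_one_left (abs_nonneg y) hs
    grw [one_sub_tanh_sq_le]
    exact mul_le_mul_of_nonneg_left (exp_le_exp.2 (by linarith)) (by norm_num)
  calc ∫ y, 1 - tanh y ^ 2 ∂gaussianReal m v
      ≤ ∫ y, 4 * exp (-2 * s * y) ∂gaussianReal m v :=
        integral_mono_of_nonneg (ae_of_all _ fun y => sub_nonneg.2 (tanh_sq_lt_one y).le)
          ((integrable_exp_mul_gaussianReal _).const_mul 4) (ae_of_all _ hpt)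
    _ = 4 * exp (m * (-2 * s) + v * (-2 * s) ^ 2 / 2) := by
        rw [integral_const_mul, ← congrFun mgf_fun_id_gaussianReal]
        rfl
    _ ≤ 4 * exp (2 * v - 2 * |m|) := by
        have : s ^ 2 ≤ 1 := sq_le_one_iff_abs_le_one s |>.2 hs
        gcongr
        nlinarith [v.2]

section

variable {E : Type*} [NormedAddCommGroup E] [InnerProductSpace ℝ E] [FiniteDimensional ℝ E]
  [MeasurableSpace E] [BorelSpace E]

lemma stdGaussian_map_strongDual (L : StrongDual ℝ E) :
    (stdGaussian E).map L = gaussianReal 0 (‖L‖₊ ^ 2) := by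
  rw [IsGaussian.map_eq_gaussianReal, integral_strongDual_stdGaussian,
    variance_dual_stdGaussian]
  congr
  rw [← NNReal.coe_inj]
  simp

lemma stdGaussian_map_add_map_inner (w ξ : E) :
    ((stdGaussian E).map (· + ξ)).map (fun x => ⟪w, x⟫) = gaussianReal ⟪w, ξ⟫ (‖w‖₊ ^ 2) := by
  have hL : (stdGaussian E).map (fun x => ⟪w, x⟫) = gaussianReal 0 (‖w‖₊ ^ 2) := by
    have hnorm : ‖innerSL ℝ w‖₊ = ‖w‖₊ := NNReal.eq (innerSL_apply_norm ℝ w)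
    rw [← hnorm]
    exact stdGaussian_map_strongDual (innerSL ℝ w)
  have hcomp : (fun x => ⟪w, x⟫) ∘ (· + ξ) = (· + ⟪w, ξ⟫) ∘ (fun x => ⟪w, x⟫) := by
    ext x
    simp [inner_add_right]
  rw [Measure.map_map (by fun_prop) (by fun_prop), hcomp,
    ← Measure.map_map (by fun_prop) (by fun_prop), hL, gaussianReal_map_add_const, zero_add]

end

lemma gaussE_one_eq_map_stdGaussian (d : ℕ) (ξ : EuclideanSpace ℝ (Fin d)) :
    gaussE d ξ 1 = (stdGaussian (EuclideanSpace ℝ (Fin d))).map (· + ξ) := by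
  have hpi : Measure.pi (fun i => gaussianReal (ξ i) 1)
      = (Measure.pi fun _ => gaussianReal 0 1).map (fun x i => x i + ξ i) := by
    rw [Measure.pi_map_pi (f := fun i x => x + ξ i) (fun i => by fun_prop)]
    simp [gaussianReal_map_add_const]
  rw [gaussE, ← map_pi_eq_stdGaussian, hpi, Measure.map_map (by fun_prop) (by fun_prop),
    Measure.map_map (by fun_prop) (by fun_prop)]
  rfl

lemma integral_one_sub_tanh_sq_inner_gaussE_le (d : ℕ) (ξ w : EuclideanSpace ℝ (Fin d)) :
    ∫ x, 1 - tanh ⟪w, x⟫ ^ 2 ∂gaussE d ξ 1 ≤ 4 * exp (2 * ‖w‖ ^ 2 - 2 * |⟪w, ξ⟫|) := by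
  rw [gaussE_one_eq_map_stdGaussian,
    ← integral_map (φ := fun x => ⟪w, x⟫) (f := fun y => 1 - tanh y ^ 2) (by fun_prop)
      (by fun_prop), stdGaussian_map_add_map_inner]
  exact (integral_one_sub_tanh_sq_gaussianReal_le _ _).trans_eq (by simp)

lemma abs_integral_mul_one_sub_tanh_sq_gaussE_le {d : ℕ} {β Δ : ℝ} (hβ : 0 ≤ β)
    {ξ w : EuclideanSpace ℝ (Fin d)} (hw : ‖w‖ = 1) (hξ : Δ ≤ |⟪w, ξ⟫|) :
    |∫ x, β * (1 - tanh (β * ⟪w, x⟫) ^ 2) ∂gaussE d ξ 1|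
      ≤ 4 * β * exp (2 * β ^ 2 - 2 * β * Δ) := by
  have hnonneg : ∀ x, 0 ≤ β * (1 - tanh (β * ⟪w, x⟫) ^ 2) :=
    fun x => mul_nonneg hβ (sub_nonneg.2 (tanh_sq_lt_one _).le)
  rw [abs_of_nonneg (integral_nonneg hnonneg)]
  calc ∫ x, β * (1 - tanh (β * ⟪w, x⟫) ^ 2) ∂gaussE d ξ 1
      = β * ∫ x, 1 - tanh ⟪β • w, x⟫ ^ 2 ∂gaussE d ξ 1 := by
        simp_rw [real_inner_smul_left, integral_const_mul]
    _ ≤ β * (4 * exp (2 * ‖β • w‖ ^ 2 - 2 * |⟪β • w, ξ⟫|)) := by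
        gcongr
        exact integral_one_sub_tanh_sq_inner_gaussE_le d ξ (β • w)
    _ = 4 * β * exp (2 * β ^ 2 - 2 * β * |⟪w, ξ⟫|) := by
        rw [norm_smul, real_inner_smul_left, abs_mul, Real.norm_of_nonneg hβ, abs_of_nonneg hβ, hw]
        ring_nf
    _ ≤ 4 * β * exp (2 * β ^ 2 - 2 * β * Δ) := by gcongr

theorem stmt13_general (d k : ℕ) (β Δ : ℝ) (hβ : 0 < β)
    (w : Fin k → EuclideanSpace ℝ (Fin d)) (hw : ∀ ℓ, ‖w ℓ‖ = 1)
    (u : Fin k → ℝ) (hu : ∀ ℓ, u ℓ ∈ Set.Icc (-1 : ℝ) 1)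
    (ξ : EuclideanSpace ℝ (Fin d)) (hξ : ∀ ℓ, Δ ≤ |⟪w ℓ, ξ⟫|) :
    ‖∑ ℓ, (u ℓ * ∫ x, β * (1 - Real.tanh (β * ⟪w ℓ, x⟫) ^ 2) ∂(gaussE d ξ 1)) • w ℓ‖
      ≤ 8 * k * β * Real.exp (2 * β ^ 2 - 2 * β * Δ) := by
  set B := 4 * β * exp (2 * β ^ 2 - 2 * β * Δ)
  calc _ ≤ ∑ ℓ, ‖(u ℓ * ∫ x, β * (1 - tanh (β * ⟪w ℓ, x⟫) ^ 2) ∂(gaussE d ξ 1)) • w ℓ‖ :=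
        norm_sum_le _ _
    _ ≤ ∑ _ℓ : Fin k, B := by
        gcongr with ℓ
        rw [norm_smul, hw, mul_one, norm_mul, Real.norm_eq_abs, Real.norm_eq_abs]
        exact (mul_le_of_le_one_left (abs_nonneg _) (abs_le.2 (hu ℓ))).trans
          (abs_integral_mul_one_sub_tanh_sq_gaussE_le hβ.le (hw ℓ) (hξ ℓ))
    _ = k * B := by simp
    _ ≤ 8 * k * β * exp (2 * β ^ 2 - 2 * β * Δ) := by
        have : 0 ≤ k * B := by positivity
        linarith

/-- If `ξ` is far from normal to every `w^ℓ` (i.e. `|⟨w^ℓ, ξ⟩| ≥ Δ` for all `ℓ`), then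
`‖w̄(ξ)‖ ≤ 8kβ e^{2β² - 2βΔ}`, where `w̄(ξ) = Σ_ℓ u_ℓ E_ξ[f'(⟨w^ℓ, X⟩)] w^ℓ`. -/
theorem stmt13 (d k : ℕ) (hd : 1 ≤ d) (hk : 1 ≤ k) (β Δ : ℝ) (hβ : 0 < β) (hΔ : 0 < Δ)
    (w : Fin k → EuclideanSpace ℝ (Fin d)) (hw : ∀ ℓ, ‖w ℓ‖ = 1)
    (u : Fin k → ℝ) (hu : ∀ ℓ, u ℓ ∈ Set.Icc (-1 : ℝ) 1)
    (ξ : EuclideanSpace ℝ (Fin d)) (hξ : ∀ ℓ, Δ ≤ |⟪w ℓ, ξ⟫|) :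
    ‖∑ ℓ, (u ℓ * ∫ x, β * (1 - Real.tanh (β * ⟪w ℓ, x⟫) ^ 2) ∂(gaussE d ξ 1)) • w ℓ‖
      ≤ 8 * k * β * Real.exp (2 * β ^ 2 - 2 * β * Δ) :=
  stmt13_general d k β Δ hβ w hw u hu ξ hξ
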